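/- In the natural β-partition ℓ_β of a graph with arboricity α, the number of vertices with ℓ_β(v) > k is at most |V| · (2α/β)^k for every k ∈ ℕ (assuming β ≥ 1). In particular, if β ≥ (2+ε)α for ε > 0, the natural β-partition has at most O(log_{β/(2α)} n) nonempty finite layers and no vertex is assigned layer ∞. -/

import Mathlib

open Classical

variable {V : Type*}

/-- `G` has arboricity at most `a`: every subgraph `H` with at least `2` vertices
satisfies `⌈|E(H)|/(|V(H)|-1)⌉ ≤ a`, i.e. `|E(H)| ≤ a * (|V(H)| - 1)`. -/
def HasArboricity (G : SimpleGraph V) (a : ℕ) : Prop :=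
  ∀ H : G.Subgraph, 2 ≤ H.verts.ncard → H.edgeSet.ncard ≤ a * (H.verts.ncard - 1)

/-- Vertices assigned a layer `≤ i` in the iterative construction of the
`S`-induced `β`-partition. -/
noncomputable def assignedUpTo (G : SimpleGraph V) (S : Set V) (β : ℕ) : ℕ → Set V
  | 0 => {v | v ∈ S ∧ (G.neighborSet v).ncard ≤ β}
  | (i+1) => assignedUpTo G S β i ∪
      {v | v ∈ S ∧ ((G.neighborSet v) \ assignedUpTo G S β i).ncard ≤ β}

/-- The `S`-induced `β`-partition `σ_{S,β} : V → ℕ∞`. -/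
noncomputable def indSigma (G : SimpleGraph V) (S : Set V) (β : ℕ) (v : V) : ℕ∞ :=
  if _h : ∃ i, v ∈ assignedUpTo G S β i then (sInf {i | v ∈ assignedUpTo G S β i} : ℕ) else ⊤

/-- Auxiliary definition of the dependency graph, by fuel on the layer. -/
noncomputable def depAux (G : SimpleGraph V) (σ : V → ℕ∞) : ℕ → V → Set V
  | 0, v => if σ v = 0 then {v} else ∅
  | (n+1), v => if σ v = ((n+1 : ℕ) : ℕ∞)
      then insert v (⋃ w ∈ {w | G.Adj v w ∧ σ w < σ v}, depAux G σ n w)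
      else depAux G σ n v

/-- The dependency graph `D(σ, v)`. -/
noncomputable def depGraph (G : SimpleGraph V) (σ : V → ℕ∞) (v : V) : Set V :=
  depAux G σ (σ v).toNat v

/-- A partial `β`-partition: every node with finite layer has at most `β`
neighbors in equal or higher layers. -/
def IsPartialBetaPartition (G : SimpleGraph V) (β : ℕ) (lam : V → ℕ∞) : Prop :=
  ∀ v, lam v ≠ ⊤ → {w | G.Adj v w ∧ lam v ≤ lam w}.ncard ≤ β

/-!
The vertices of layer `> k` are exactly those that survive `k + 1` rounds of peeling, where a
round keeps the vertices with more than `β` neighbours among the current survivors `B`.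
Arboricity `α` bounds the edges induced on `B` by `α (|B| - 1)`, so by the handshake lemma a
round keeps fewer than `2α|B|/β` vertices: the survivors shrink geometrically with ratio
`2α/β`. When `2α < β`, a vertex of layer `i` forces `(β/2α)^i ≤ n`, so `i ≤ log_{β/2α} n`.
-/

lemma sum_ncard_neighborSet_inter_eq_two_mul [Fintype V] (G : SimpleGraph V) (B : Set V) :
    ∑ v ∈ B.toFinset, (G.neighborSet v ∩ B).ncard
      = 2 * ((⊤ : G.Subgraph).induce B).edgeSet.ncard := by
  set H := ((⊤ : G.Subgraph).induce B).spanningCoe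
  have hdeg : ∀ v, H.degree v = (H.neighborSet v).ncard := fun v => by
    rw [← SimpleGraph.card_neighborSet_eq_degree, ← Nat.card_eq_fintype_card,
      Nat.card_coe_set_eq]
  have hnbr : ∀ v, H.neighborSet v = if v ∈ B then G.neighborSet v ∩ B else ∅ := fun v => by
    ext w
    split_ifs with hv <;> simp [H, hv, and_comm]
  calc ∑ v ∈ B.toFinset, (G.neighborSet v ∩ B).ncard
      = ∑ v ∈ B.toFinset, H.degree v :=
        Finset.sum_congr rfl fun v hv => by rw [hdeg, hnbr, if_pos (Set.mem_toFinset.mp hv)]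
    _ = ∑ v, H.degree v :=
        Finset.sum_subset (Finset.subset_univ _) fun v _ hv => by
          rw [hdeg, hnbr, if_neg (by simpa using hv), Set.ncard_empty]
    _ = 2 * H.edgeFinset.card := H.sum_degrees_eq_twice_card_edges
    _ = 2 * ((⊤ : G.Subgraph).induce B).edgeSet.ncard := by
        rw [← Set.ncard_coe_finset, SimpleGraph.coe_edgeFinset,
          SimpleGraph.Subgraph.edgeSet_spanningCoe]

def heavyVertices (G : SimpleGraph V) (β : ℕ) (B : Set V) : Set V :=
  {v | v ∈ B ∧ β < (G.neighborSet v ∩ B).ncard}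

lemma heavyVertices_subset (G : SimpleGraph V) (β : ℕ) (B : Set V) :
    heavyVertices G β B ⊆ B :=
  fun _ hv => hv.1

lemma mul_ncard_heavyVertices_le [Fintype V] {G : SimpleGraph V} {α : ℕ}
    (hG : HasArboricity G α) (β : ℕ) (B : Set V) :
    β * (heavyVertices G β B).ncard ≤ 2 * α * B.ncard := by
  set C := heavyVertices G β B
  rcases C.eq_empty_or_nonempty with hC | ⟨v, hvB, hv⟩
  · simp [hC]
  have hB : 2 ≤ B.ncard := by
    obtain ⟨w, hvw, hwB⟩ : (G.neighborSet v ∩ B).Nonempty :=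
      Set.nonempty_of_ncard_ne_zero (by omega)
    exact (Set.one_lt_ncard_iff).mpr ⟨v, w, hvB, hwB, G.ne_of_adj hvw⟩
  have hCB : C.toFinset ⊆ B.toFinset :=
    Set.toFinset_subset_toFinset.mpr (heavyVertices_subset G β B)
  calc β * C.ncard
      ≤ ∑ v ∈ C.toFinset, (G.neighborSet v ∩ B).ncard := by
        rw [Set.ncard_eq_toFinset_card', mul_comm, ← smul_eq_mul]
        exact Finset.card_nsmul_le_sum _ _ _ fun v hv => (Set.mem_toFinset.mp hv).2.le
    _ ≤ ∑ v ∈ B.toFinset, (G.neighborSet v ∩ B).ncard := Finset.sum_le_sum_of_subset hCB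
    _ = 2 * ((⊤ : G.Subgraph).induce B).edgeSet.ncard :=
        sum_ncard_neighborSet_inter_eq_two_mul G B
    _ ≤ 2 * (α * (B.ncard - 1)) := Nat.mul_le_mul_left _ (hG _ hB)
    _ ≤ 2 * α * B.ncard := by rw [mul_assoc]; gcongr; omega

lemma ncard_iterate_heavyVertices_le [Fintype V] {G : SimpleGraph V} {α β : ℕ}
    (hG : HasArboricity G α) (hβ : 0 < β) (k : ℕ) :
    (((heavyVertices G β)^[k] Set.univ).ncard : ℝ)
      ≤ Fintype.card V * ((2 * α : ℝ) / β) ^ k := by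
  induction k with
  | zero => simp
  | succ k ih =>
    set B := (heavyVertices G β)^[k] Set.univ
    have hshrink : (β : ℝ) * (heavyVertices G β B).ncard ≤ 2 * α * B.ncard := by
      exact_mod_cast mul_ncard_heavyVertices_le hG β B
    have hβ' : (0 : ℝ) < β := by exact_mod_cast hβ
    calc (((heavyVertices G β)^[k + 1] Set.univ).ncard : ℝ)
        = (heavyVertices G β B).ncard := by rw [Function.iterate_succ_apply']
      _ ≤ (2 * α : ℝ) / β * B.ncard := by
          rw [div_mul_eq_mul_div, le_div_iff₀' hβ']; exact hshrink
      _ ≤ (2 * α : ℝ) / β * (Fintype.card V * ((2 * α : ℝ) / β) ^ k) := by gcongr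
      _ = Fintype.card V * ((2 * α : ℝ) / β) ^ (k + 1) := by ring

lemma assignedUpTo_mono (G : SimpleGraph V) (S : Set V) (β : ℕ) :
    Monotone (assignedUpTo G S β) :=
  monotone_nat_of_le_succ fun _ => Set.subset_union_left

lemma compl_assignedUpTo_univ (G : SimpleGraph V) (β k : ℕ) :
    (assignedUpTo G Set.univ β k)ᶜ = (heavyVertices G β)^[k + 1] Set.univ := by
  induction k with
  | zero => ext v; simp [assignedUpTo, heavyVertices]
  | succ k ih =>
    rw [Function.iterate_succ_apply', ← ih]
    ext v
    simp [assignedUpTo, heavyVertices, Set.sdiff_eq_compl_inter, Set.inter_comm]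

lemma indSigma_le_iff_mem_assignedUpTo (G : SimpleGraph V) (S : Set V) (β k : ℕ) (v : V) :
    indSigma G S β v ≤ k ↔ v ∈ assignedUpTo G S β k := by
  by_cases hv : ∃ i, v ∈ assignedUpTo G S β i
  · rw [indSigma, dif_pos hv, Nat.cast_le]
    exact ⟨fun h => assignedUpTo_mono G S β h (Nat.sInf_mem hv), fun h => Nat.sInf_le h⟩
  · rw [indSigma, dif_neg hv]
    exact ⟨fun h => absurd h (by simp), fun h => absurd ⟨k, h⟩ hv⟩

lemma mem_iterate_heavyVertices_univ_iff (G : SimpleGraph V) (β k : ℕ) (v : V) :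
    v ∈ (heavyVertices G β)^[k] Set.univ ↔ (k : ℕ∞) ≤ indSigma G Set.univ β v := by
  cases k with
  | zero => simp
  | succ k =>
    rw [← compl_assignedUpTo_univ, Set.mem_compl_iff, ← indSigma_le_iff_mem_assignedUpTo,
      not_le, Nat.cast_succ, ENat.add_one_le_iff (ENat.natCast_ne_top k)]

lemma setOf_lt_indSigma_univ_eq (G : SimpleGraph V) (β k : ℕ) :
    {v | (k : ℕ∞) < indSigma G Set.univ β v} = (heavyVertices G β)^[k + 1] Set.univ := by
  ext v
  rw [mem_iterate_heavyVertices_univ_iff, Set.mem_ofPred_eq, Nat.cast_succ,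
    ENat.add_one_le_iff (ENat.natCast_ne_top k)]

lemma one_le_card_mul_pow_of_le_indSigma [Fintype V] {G : SimpleGraph V} {α β : ℕ}
    (hG : HasArboricity G α) (hβ : 0 < β) {k : ℕ} {v : V}
    (hv : (k : ℕ∞) ≤ indSigma G Set.univ β v) :
    1 ≤ Fintype.card V * ((2 * α : ℝ) / β) ^ k :=
  calc (1 : ℝ) ≤ ((heavyVertices G β)^[k] Set.univ).ncard := by
        exact_mod_cast (Set.ncard_pos).mpr
          ⟨v, (mem_iterate_heavyVertices_univ_iff G β k v).mpr hv⟩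
    _ ≤ Fintype.card V * ((2 * α : ℝ) / β) ^ k := ncard_iterate_heavyVertices_le hG hβ k

lemma nat_le_logb_inv_of_one_le_mul_pow {r x : ℝ} {m : ℕ} (hr0 : 0 ≤ r) (hr1 : r < 1)
    (h : 1 ≤ x * r ^ m) : (m : ℝ) ≤ Real.logb r⁻¹ x := by
  -- `r = 0` is allowed: then `logb r⁻¹ x = logb 0 x = 0`, and `h` forces `m = 0`.
  rcases hr0.eq_or_lt with rfl | hr
  · cases m with
    | zero => simp [Real.logb]
    | succ m => simp at h; linarith
  have hx : 0 < x := pos_of_mul_pos_left (by linarith) (pow_nonneg hr0 m)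
  rw [Real.le_logb_iff_rpow_le (one_lt_inv₀ hr |>.mpr hr1) hx, Real.rpow_natCast, inv_pow,
    inv_le_iff_one_le_mul₀ (pow_pos hr m)]
  exact h

lemma ncard_le_add_one_of_forall_cast_le {S : Set ℕ} {x : ℝ} (hx : 0 ≤ x)
    (h : ∀ i ∈ S, (i : ℝ) ≤ x) : (S.ncard : ℝ) ≤ x + 1 := by
  have hS : S ⊆ Set.Iic ⌊x⌋₊ := fun i hi => Nat.le_floor (h i hi)
  calc (S.ncard : ℝ) ≤ (Set.Iic ⌊x⌋₊).ncard := by exact_mod_cast Set.ncard_le_ncard hS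
    _ = ⌊x⌋₊ + 1 := by rw [Set.ncard_Iic_nat, Nat.cast_succ]
    _ ≤ x + 1 := by gcongr; exact Nat.floor_le hx

/-- In the natural `β`-partition `ℓ_β`, the number of vertices with
`ℓ_β(v) > k` is at most `|V|·(2α/β)^k`; moreover, if `β ≥ (2+ε)α` for some `ε > 0`,
no vertex has layer `∞` and the number of nonempty finite layers is at most
`log_{β/(2α)} n + 1` (which is `O(log_{β/(2α)} n)`). -/
theorem natural_partition_layers [Fintype V] (G : SimpleGraph V) (α β : ℕ)
    (hβ : 1 ≤ β) (hG : HasArboricity G α) :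
    (∀ k : ℕ,
      ({v : V | (k : ℕ∞) < indSigma G Set.univ β v}.ncard : ℝ)
        ≤ (Fintype.card V) * ((2 * α : ℝ) / β) ^ k) ∧
    (∀ ε : ℝ, 0 < ε → (2 + ε) * α ≤ (β : ℝ) →
      (∀ v : V, indSigma G Set.univ β v ≠ ⊤) ∧
      ({i : ℕ | ∃ v : V, indSigma G Set.univ β v = (i : ℕ∞)}.ncard : ℝ)
        ≤ Real.logb ((β : ℝ) / (2 * α)) (Fintype.card V) + 1) := by
  set r : ℝ := 2 * α / β
  refine ⟨fun k => ?_, fun ε hε hεβ => ?_⟩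
  · rw [setOf_lt_indSigma_univ_eq, Function.iterate_succ_apply']
    exact le_trans (by exact_mod_cast Set.ncard_le_ncard (heavyVertices_subset G β _))
      (ncard_iterate_heavyVertices_le hG hβ k)
  have hr1 : r < 1 := by
    have hβ' : (1 : ℝ) ≤ β := by exact_mod_cast hβ
    rw [div_lt_one (by linarith)]
    nlinarith [mul_nonneg hε.le (Nat.cast_nonneg α : (0 : ℝ) ≤ α)]
  have hlog (i : ℕ) (v : V) (hv : (i : ℕ∞) ≤ indSigma G Set.univ β v) :
      (i : ℝ) ≤ Real.logb r⁻¹ (Fintype.card V) :=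
    nat_le_logb_inv_of_one_le_mul_pow (by positivity) hr1
      (one_le_card_mul_pow_of_le_indSigma hG hβ hv)
  rw [show (β : ℝ) / (2 * α) = r⁻¹ from (inv_div _ _).symm]
  refine ⟨fun v hv => ?_, ?_⟩
  · have := hlog (⌊Real.logb r⁻¹ (Fintype.card V)⌋₊ + 1) v (hv ▸ le_top)
    exact (Nat.lt_floor_add_one _).not_ge (by exact_mod_cast this)
  · refine ncard_le_add_one_of_forall_cast_le ?_ fun i ⟨v, hv⟩ => hlog i v hv.ge
    rcases isEmpty_or_nonempty V with _ | ⟨⟨v⟩⟩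
    · simp
    · exact_mod_cast hlog 0 v bot_le
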